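/- arXiv:0707.4588 — 2 statements merged into one kernel-verified Lean document; each statement's English description precedes it below -/
import Mathlib

section
/- Let u : [a,b] → ℝ be continuous and let J = [α,β] ⊆ [a,b] be admissible for u. If u(α) ≥ 0 and u(β) ≥ 0, then u(x) ≥ 0 for all x ∈ J. Analogously, if u(α) ≤ 0 and u(β) ≤ 0, then u(x) ≤ 0 for all x ∈ J. -/
open Set

/-- A continuous function `u` has a *double crossover* on `[α, β]` if for some sign
`σ ∈ {+1, −1}` one has `σ·u(α) ≥ 0`, `σ·u((α+β)/2) ≤ 0` and `σ·u(β) ≥ 0`. -/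
def DoubleCrossover (u : ℝ → ℝ) (α β : ℝ) : Prop :=
  ∃ σ : ℝ, (σ = 1 ∨ σ = -1) ∧
    0 ≤ σ * u α ∧ σ * u ((α + β) / 2) ≤ 0 ∧ 0 ≤ σ * u β

/-- The interval `[α, β]` is *admissible* for `u` if `u` has no double crossover on any
dyadic subinterval `[d_{n,k}, d_{n,k+1}]`, where `d_{n,k} = α + (β − α)·k/2^n`. -/
def IntervalAdmissible (u : ℝ → ℝ) (α β : ℝ) : Prop :=
  ∀ n k : ℕ, k < 2 ^ n →
    ¬ DoubleCrossover u (α + (β - α) * k / 2 ^ n) (α + (β - α) * (k + 1) / 2 ^ n)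

/-!
If `σ·u ≥ 0` at both ends of a dyadic subinterval, admissibility forbids `σ·u < 0` at its
midpoint, so by induction on the level `σ·u ≥ 0` at every dyadic point of `J`. The dyadic points
are dense in `J`, and continuity carries the sign to all of `J`; the two signs `σ = ±1` give the
two halves of the statement.
-/

open Filter Topology

noncomputable def dyadicPoint (α β : ℝ) (n k : ℕ) : ℝ := α + (β - α) * k / 2 ^ n

section dyadicPoint

variable (α β : ℝ) (n k : ℕ)

lemma dyadicPoint_succ_two_mul : dyadicPoint α β (n + 1) (2 * k) = dyadicPoint α β n k := by
  simp only [dyadicPoint]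
  push_cast
  ring

lemma dyadicPoint_succ_two_mul_add_one :
    dyadicPoint α β (n + 1) (2 * k + 1) = (dyadicPoint α β n k + dyadicPoint α β n (k + 1)) / 2 := by
  simp only [dyadicPoint]
  push_cast
  ring

variable {α β n k}

lemma dyadicPoint_mem_Icc (hαβ : α ≤ β) (hk : k ≤ 2 ^ n) : dyadicPoint α β n k ∈ Icc α β := by
  have hk' : (k : ℝ) / 2 ^ n ≤ 1 := div_le_one_of_le₀ (by exact_mod_cast hk) (by positivity)
  have hβα : 0 ≤ β - α := sub_nonneg.2 hαβ
  simp only [dyadicPoint, mul_div_assoc]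
  constructor <;> nlinarith [show 0 ≤ (k : ℝ) / 2 ^ n by positivity]

lemma tendsto_dyadicPoint_floor {t : ℝ} (ht : 0 ≤ t) :
    Tendsto (fun n ↦ dyadicPoint α β n ⌊t * 2 ^ n⌋₊) atTop (𝓝 (α + (β - α) * t)) := by
  have hfloor : Tendsto (fun n : ℕ ↦ (⌊t * 2 ^ n⌋₊ : ℝ) / 2 ^ n) atTop (𝓝 t) :=
    (tendsto_nat_floor_mul_div_atTop ht).comp (tendsto_pow_atTop_atTop_of_one_lt one_lt_two)
  simpa only [dyadicPoint, mul_div_assoc] using (hfloor.const_mul (β - α)).const_add α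

end dyadicPoint

lemma ContinuousOn.nonneg_of_nonneg_dyadicPoint {f : ℝ → ℝ} {α β : ℝ}
    (hf : ContinuousOn f (Icc α β)) (hdyadic : ∀ n k, k ≤ 2 ^ n → 0 ≤ f (dyadicPoint α β n k)) :
    ∀ x ∈ Icc α β, 0 ≤ f x := by
  intro x hx
  have hαβ : α ≤ β := hx.1.trans hx.2
  obtain ⟨t, ⟨ht₀, ht₁⟩, rfl⟩ : ∃ t ∈ Icc (0 : ℝ) 1, AffineMap.lineMap α β t = x := by
    rwa [← segment_eq_Icc hαβ, segment_eq_image_lineMap] at hx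
  have hk : ∀ n : ℕ, ⌊t * 2 ^ n⌋₊ ≤ 2 ^ n := fun n ↦
    Nat.floor_le_of_le (by simpa using mul_le_of_le_one_left (pow_nonneg zero_le_two n) ht₁)
  rw [AffineMap.lineMap_apply_ring', mul_comm, add_comm] at hx ⊢
  have hlim := tendsto_nhdsWithin_iff.2
    ⟨tendsto_dyadicPoint_floor (α := α) (β := β) ht₀,
      Eventually.of_forall fun n ↦ dyadicPoint_mem_Icc hαβ (hk n)⟩
  exact ge_of_tendsto' ((hf _ hx).tendsto.comp hlim) fun n ↦ hdyadic n _ (hk n)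

namespace IntervalAdmissible

variable {u : ℝ → ℝ} {α β : ℝ}

lemma not_doubleCrossover_dyadicPoint (hadm : IntervalAdmissible u α β) {n k : ℕ}
    (hk : k < 2 ^ n) :
    ¬ DoubleCrossover u (dyadicPoint α β n k) (dyadicPoint α β n (k + 1)) := by
  simpa only [dyadicPoint, Nat.cast_succ] using hadm n k hk

lemma sign_mul_nonneg_dyadicPoint (hadm : IntervalAdmissible u α β) {σ : ℝ}
    (hσ : σ = 1 ∨ σ = -1) (hα : 0 ≤ σ * u α) (hβ : 0 ≤ σ * u β) :
    ∀ n k, k ≤ 2 ^ n → 0 ≤ σ * u (dyadicPoint α β n k) := by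
  intro n
  induction n with
  | zero =>
    intro k hk
    obtain rfl | rfl : k = 0 ∨ k = 1 := by omega
    · simpa [dyadicPoint] using hα
    · simpa [dyadicPoint] using hβ
  | succ n ih =>
    intro k hk
    obtain ⟨j, rfl | rfl⟩ := Nat.even_or_odd' k
    · rw [dyadicPoint_succ_two_mul]
      exact ih j (by omega)
    · -- a negative value at the midpoint would be a double crossover with sign σ
      by_contra hmid
      refine hadm.not_doubleCrossover_dyadicPoint (n := n) (k := j) (by omega)
        ⟨σ, hσ, ih j (by omega), ?_, ih (j + 1) (by omega)⟩
      rw [← dyadicPoint_succ_two_mul_add_one]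
      exact (not_le.1 hmid).le

lemma sign_mul_nonneg (hadm : IntervalAdmissible u α β) (hu : ContinuousOn u (Icc α β))
    {σ : ℝ} (hσ : σ = 1 ∨ σ = -1) (hα : 0 ≤ σ * u α) (hβ : 0 ≤ σ * u β) :
    ∀ x ∈ Icc α β, 0 ≤ σ * u x :=
  (continuousOn_const.mul hu).nonneg_of_nonneg_dyadicPoint
    (hadm.sign_mul_nonneg_dyadicPoint hσ hα hβ)

end IntervalAdmissible

theorem nonneg_on_admissible_interval_general (a b α β : ℝ) (u : ℝ → ℝ)
    (hcont : ContinuousOn u (Icc a b))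
    (haα : a ≤ α) (hβb : β ≤ b)
    (hadm : IntervalAdmissible u α β) :
    ((0 ≤ u α ∧ 0 ≤ u β) → ∀ x ∈ Icc α β, 0 ≤ u x) ∧
    ((u α ≤ 0 ∧ u β ≤ 0) → ∀ x ∈ Icc α β, u x ≤ 0) := by
  have hu : ContinuousOn u (Icc α β) := hcont.mono (Icc_subset_Icc haα hβb)
  refine ⟨fun ⟨hα, hβ⟩ x hx ↦ ?_, fun ⟨hα, hβ⟩ x hx ↦ ?_⟩
  · simpa using hadm.sign_mul_nonneg hu (.inl rfl) (by simpa) (by simpa) x hx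
  · simpa using hadm.sign_mul_nonneg hu (.inr rfl) (by simpa) (by simpa) x hx

/-- **Lemma 2.3.** If `J = [α, β] ⊆ [a, b]` is admissible for the continuous function `u`
and `u(α) ≥ 0`, `u(β) ≥ 0`, then `u ≥ 0` on `J`; analogously for `≤ 0`. -/
theorem nonneg_on_admissible_interval (a b α β : ℝ) (u : ℝ → ℝ)
    (hcont : ContinuousOn u (Icc a b))
    (haα : a ≤ α) (hαβ : α ≤ β) (hβb : β ≤ b)
    (hadm : IntervalAdmissible u α β) :
    ((0 ≤ u α ∧ 0 ≤ u β) → ∀ x ∈ Icc α β, 0 ≤ u x) ∧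
    ((u α ≤ 0 ∧ u β ≤ 0) → ∀ x ∈ Icc α β, u x ≤ 0) :=
  nonneg_on_admissible_interval_general a b α β u hcont haα hβb hadm
end

section
/- Let L > 0 and let (a_k)_{k≥0} be real numbers with Σ_k k⁸·a_k² < ∞ such that at least two of the a_k are nonzero. Define r(δ) = Σ_{k≥0} a_k²·cos(2πkδ/L), A_ℓ = Σ_{k≥0} k^{2ℓ}·a_k², R_ℓ = (2π/L)^{2ℓ}·A_ℓ, and for δ > 0 let C(δ) be the symmetric 3×3 matrix with rows (r(0), r(δ/2), r(δ)), (r(δ/2), r(0), r(δ/2)), (r(δ), r(δ/2), r(0)). Then as δ → 0⁺, det C(δ) = (R₁/64)·(R₀R₂ − R₁²)·δ⁶ + O(δ⁸); in particular C(δ) is positive definite for all sufficiently small δ > 0. -/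
/-!
With `q(δ) = r(0) - r(δ)`, the centrosymmetric matrix `C(δ)` has the eigenvector `(1, 0, -1)` with
eigenvalue `q(δ)`, and the complementary `2 × 2` block has determinant
`r(0)(r(0) + r(δ)) - 2 r(δ/2)² = 4 r(0) q(δ/2) - 2 q(δ/2)² - r(0) q(δ)`.
Expanding each cosine to fourth order, with the sixth-order remainder summed against the moment
`A₃`, gives `q(δ) = R₁δ²/2 - R₂δ⁴/24 + O(δ⁶)`. Substituting, the block determinant is
`(R₀R₂ - R₁²)δ⁴/32 + O(δ⁶)` (the `δ²` terms cancel), and multiplying by `q(δ)` gives the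
expansion of `det C(δ)`. Since `R₀R₂ - R₁² > 0` is strict Cauchy–Schwarz for the weights `a_k²`
at two distinct frequencies, both factors are positive for small `δ > 0`, which together with
`r(0) > 0` makes `C(δ)` positive definite.
-/

open Real Filter Topology Asymptotics

lemma nonneg_of_hasDerivAt_of_nonneg {f f' : ℝ → ℝ} (hf : ∀ x, HasDerivAt f (f' x) x)
    (h₀ : f 0 = 0) (hf' : ∀ x, 0 ≤ x → 0 ≤ f' x) {x : ℝ} (hx : 0 ≤ x) : 0 ≤ f x := by
  have hmono : MonotoneOn f (Set.Ici 0) :=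
    monotoneOn_of_hasDerivWithinAt_nonneg (convex_Ici 0)
      (fun y _ => (hf y).continuousAt.continuousWithinAt)
      (fun y _ => (hf y).hasDerivWithinAt) (fun y hy => hf' y (interior_subset hy))
  simpa [h₀] using hmono Set.self_mem_Ici hx hx

lemma cos_le_taylor_four {x : ℝ} (hx : 0 ≤ x) : cos x ≤ 1 - x ^ 2 / 2 + x ^ 4 / 24 := by
  have := nonneg_of_hasDerivAt_of_nonneg (f := fun x => 1 - x ^ 2 / 2 + x ^ 4 / 24 - cos x)
    (fun x => ((((hasDerivAt_const x 1).sub ((hasDerivAt_pow 2 x).div_const 2)).add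
      ((hasDerivAt_pow 4 x).div_const 24)).sub (hasDerivAt_cos x)).congr_deriv
      (show _ = sin x - (x - x ^ 3 / 6) by push_cast; ring))
    (by norm_num) (fun y hy => sub_nonneg.2 (sin_ge_sub_cube hy)) hx
  linarith

lemma sin_le_taylor_five {x : ℝ} (hx : 0 ≤ x) : sin x ≤ x - x ^ 3 / 6 + x ^ 5 / 120 := by
  have := nonneg_of_hasDerivAt_of_nonneg (f := fun x => x - x ^ 3 / 6 + x ^ 5 / 120 - sin x)
    (fun x => ((((hasDerivAt_id x).sub ((hasDerivAt_pow 3 x).div_const 6)).add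
      ((hasDerivAt_pow 5 x).div_const 120)).sub (hasDerivAt_sin x)).congr_deriv
      (show _ = 1 - x ^ 2 / 2 + x ^ 4 / 24 - cos x by push_cast; ring))
    (by norm_num) (fun y hy => sub_nonneg.2 (cos_le_taylor_four hy)) hx
  linarith

lemma taylor_six_le_cos {x : ℝ} (hx : 0 ≤ x) :
    1 - x ^ 2 / 2 + x ^ 4 / 24 - x ^ 6 / 720 ≤ cos x := by
  have := nonneg_of_hasDerivAt_of_nonneg
    (f := fun x => cos x - (1 - x ^ 2 / 2 + x ^ 4 / 24 - x ^ 6 / 720))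
    (fun x => ((hasDerivAt_cos x).sub ((((hasDerivAt_const x 1).sub
      ((hasDerivAt_pow 2 x).div_const 2)).add ((hasDerivAt_pow 4 x).div_const 24)).sub
      ((hasDerivAt_pow 6 x).div_const 720))).congr_deriv
      (show _ = x - x ^ 3 / 6 + x ^ 5 / 120 - sin x by push_cast; ring))
    (by norm_num) (fun y hy => sub_nonneg.2 (sin_le_taylor_five hy)) hx
  linarith

lemma abs_cos_sub_taylor_four_le (x : ℝ) :
    |cos x - (1 - x ^ 2 / 2 + x ^ 4 / 24)| ≤ x ^ 6 / 720 := by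
  wlog hx : 0 ≤ x generalizing x
  · simpa [Even.neg_pow (by decide : Even 2), Even.neg_pow (by decide : Even 4),
      Even.neg_pow (by decide : Even 6)] using this (-x) (by linarith)
  rw [abs_le]
  constructor <;> linarith [cos_le_taylor_four hx, taylor_six_le_cos hx]

lemma summable_pow_mul_of_le {w : ℕ → ℝ} (hw : ∀ k, 0 ≤ w k) {m n : ℕ} (hmn : m ≤ n)
    (h : Summable fun k : ℕ => (k : ℝ) ^ n * w k) : Summable fun k : ℕ => (k : ℝ) ^ m * w k := by
  refine (summable_nat_add_iff 1).1 <| ((summable_nat_add_iff 1).2 h).of_nonneg_of_le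
    (fun k => mul_nonneg (by positivity) (hw _)) fun k => ?_
  exact mul_le_mul_of_nonneg_right (pow_le_pow_right₀ (by simp) hmn) (hw _)

lemma sq_tsum_mul_lt_tsum_mul_tsum {w f : ℕ → ℝ} (hw : ∀ k, 0 ≤ w k) (hw₀ : Summable w)
    (hf₁ : Summable fun k => f k * w k) (hf₂ : Summable fun k => f k ^ 2 * w k)
    {i j : ℕ} (hfij : f i ≠ f j) (hi : w i ≠ 0) (hj : w j ≠ 0) :
    (∑' k, f k * w k) ^ 2 < (∑' k, w k) * ∑' k, f k ^ 2 * w k := by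
  set S₀ := ∑' k, w k
  set S₁ := ∑' k, f k * w k
  set S₂ := ∑' k, f k ^ 2 * w k
  have hS₀ : 0 < S₀ := hw₀.tsum_pos hw i ((hw i).lt_of_ne' hi)
  set t := S₁ / S₀
  have hvar : HasSum (fun k => (f k - t) ^ 2 * w k) (S₂ - 2 * t * S₁ + t ^ 2 * S₀) := by
    refine ((hf₂.hasSum.sub (hf₁.hasSum.mul_left (2 * t))).add
      (hw₀.hasSum.mul_left (t ^ 2))).congr_fun fun k => ?_
    ring
  obtain ⟨n, hn, hfn⟩ : ∃ n, w n ≠ 0 ∧ f n ≠ t := by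
    by_cases h : f i = t
    · exact ⟨j, hj, fun h' => hfij (h.trans h'.symm)⟩
    · exact ⟨i, hi, h⟩
  have hpos : 0 < S₂ - 2 * t * S₁ + t ^ 2 * S₀ := by
    rw [← hvar.tsum_eq]
    exact hvar.summable.tsum_pos (fun k => mul_nonneg (sq_nonneg _) (hw k)) n
      (mul_pos (pow_pos (abs_pos.2 (sub_ne_zero.2 hfn)) 2 |>.trans_eq (sq_abs _))
        ((hw n).lt_of_ne' hn))
  have : S₀ * S₂ - S₁ ^ 2 = S₀ * (S₂ - 2 * t * S₁ + t ^ 2 * S₀) := by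
    simp only [t]; field_simp; ring
  nlinarith [mul_pos hS₀ hpos]

lemma tsum_pow_mul_pos {w : ℕ → ℝ} (hw : ∀ k, 0 ≤ w k) {m : ℕ}
    (h : Summable fun k : ℕ => (k : ℝ) ^ m * w k) {i : ℕ} (hi : i ≠ 0) (hwi : w i ≠ 0) :
    0 < ∑' k : ℕ, (k : ℝ) ^ m * w k := by
  have hi' : (i : ℝ) ≠ 0 := by exact_mod_cast hi
  exact h.tsum_pos (fun k => mul_nonneg (by positivity) (hw k)) i
    (mul_pos (by positivity) ((hw i).lt_of_ne' hwi))

lemma sq_tsum_sq_mul_lt {w : ℕ → ℝ} (hw : ∀ k, 0 ≤ w k)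
    (h₄ : Summable fun k : ℕ => (k : ℝ) ^ 4 * w k) {i j : ℕ} (hij : i ≠ j) (hi : w i ≠ 0)
    (hj : w j ≠ 0) :
    (∑' k : ℕ, (k : ℝ) ^ 2 * w k) ^ 2 < (∑' k, w k) * ∑' k : ℕ, (k : ℝ) ^ 4 * w k := by
  have h₀ : Summable w := by simpa using summable_pow_mul_of_le hw (Nat.zero_le 4) h₄
  have := sq_tsum_mul_lt_tsum_mul_tsum (f := fun k : ℕ => (k : ℝ) ^ 2) hw h₀
    (summable_pow_mul_of_le hw (by norm_num) h₄) (by simpa only [← pow_mul] using h₄)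
    (by exact_mod_cast (Nat.pow_left_injective two_ne_zero).ne hij) hi hj
  simpa only [← pow_mul] using this

lemma abs_tsum_mul_cos_sub_taylor_le {w : ℕ → ℝ} (hw : ∀ k, 0 ≤ w k)
    (h₆ : Summable fun k : ℕ => (k : ℝ) ^ 6 * w k) (ω δ : ℝ) :
    |∑' k : ℕ, w k * cos (ω * k * δ) - (∑' k, w k - (ω * δ) ^ 2 / 2 * ∑' k : ℕ, (k : ℝ) ^ 2 * w k
        + (ω * δ) ^ 4 / 24 * ∑' k : ℕ, (k : ℝ) ^ 4 * w k)|
      ≤ (ω * δ) ^ 6 / 720 * ∑' k : ℕ, (k : ℝ) ^ 6 * w k := by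
  have h₀ : Summable w := by simpa using summable_pow_mul_of_le hw (Nat.zero_le 6) h₆
  have h₂ := summable_pow_mul_of_le hw (by norm_num : 2 ≤ 6) h₆
  have h₄ := summable_pow_mul_of_le hw (by norm_num : 4 ≤ 6) h₆
  have hcos : Summable fun k : ℕ => w k * cos (ω * k * δ) :=
    h₀.of_norm_bounded fun k => by
      rw [norm_mul, Real.norm_of_nonneg (hw k)]
      exact mul_le_of_le_one_right (hw k) (abs_cos_le_one _)
  have hsum : HasSum (fun k : ℕ => w k * (cos (ω * k * δ)
      - (1 - (ω * k * δ) ^ 2 / 2 + (ω * k * δ) ^ 4 / 24))) (∑' k : ℕ, w k * cos (ω * k * δ)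
      - (∑' k, w k - (ω * δ) ^ 2 / 2 * ∑' k : ℕ, (k : ℝ) ^ 2 * w k
        + (ω * δ) ^ 4 / 24 * ∑' k : ℕ, (k : ℝ) ^ 4 * w k)) := by
    refine (hcos.hasSum.sub ((h₀.hasSum.sub (h₂.hasSum.mul_left ((ω * δ) ^ 2 / 2))).add
      (h₄.hasSum.mul_left ((ω * δ) ^ 4 / 24)))).congr_fun fun k => ?_
    ring
  rw [← hsum.tsum_eq, ← Real.norm_eq_abs]
  refine tsum_of_norm_bounded (h₆.hasSum.mul_left _) fun k => ?_
  rw [norm_mul, Real.norm_of_nonneg (hw k), Real.norm_eq_abs]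
  calc w k * |cos (ω * k * δ) - (1 - (ω * k * δ) ^ 2 / 2 + (ω * k * δ) ^ 4 / 24)|
      ≤ w k * ((ω * k * δ) ^ 6 / 720) :=
        mul_le_mul_of_nonneg_left (abs_cos_sub_taylor_four_le _) (hw k)
    _ = (ω * δ) ^ 6 / 720 * ((k : ℝ) ^ 6 * w k) := by ring

lemma isBigO_cos_series_sub_taylor {w : ℕ → ℝ} (hw : ∀ k, 0 ≤ w k)
    (h₆ : Summable fun k : ℕ => (k : ℝ) ^ 6 * w k) {ω : ℝ} {ρ : ℝ → ℝ}
    (hρ : ∀ δ, ρ δ = ∑' k : ℕ, w k * cos (ω * k * δ)) :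
    (fun δ => ρ 0 - ρ δ - ((ω ^ 2 * ∑' k : ℕ, (k : ℝ) ^ 2 * w k) * δ ^ 2 / 2
      - (ω ^ 4 * ∑' k : ℕ, (k : ℝ) ^ 4 * w k) * δ ^ 4 / 24)) =O[𝓝 0] fun δ => δ ^ 6 := by
  refine IsBigO.of_bound (ω ^ 6 / 720 * ∑' k : ℕ, (k : ℝ) ^ 6 * w k)
    (Eventually.of_forall fun δ => ?_)
  have hρ₀ : ρ 0 = ∑' k, w k := by simp [hρ]
  rw [Real.norm_eq_abs, ← abs_neg, Real.norm_of_nonneg (by positivity), hρ₀, hρ δ]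
  refine ((le_of_eq ?_).trans (abs_tsum_mul_cos_sub_taylor_le hw h₆ ω δ)).trans_eq (by ring)
  congr 1
  ring

lemma isBigO_pow_pow_of_le {m n : ℕ} (h : m ≤ n) :
    (fun x : ℝ => x ^ n) =O[𝓝 0] fun x => x ^ m := by
  rcases h.eq_or_lt with rfl | h
  · exact isBigO_refl _ _
  · exact (isLittleO_pow_pow h).isBigO

lemma Asymptotics.IsBigO.comp_half {f : ℝ → ℝ} {n : ℕ} (h : f =O[𝓝 0] fun x => x ^ n) :
    (fun x => f (x / 2)) =O[𝓝 0] fun x => x ^ n := by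
  have ht : Tendsto (fun x : ℝ => x / 2) (𝓝 0) (𝓝 0) := by
    simpa using (continuous_id.div_const (2 : ℝ)).tendsto 0
  refine (h.comp_tendsto ht).trans ?_
  exact (isBigO_const_mul_self ((1 / 2 : ℝ) ^ n) _ _).congr_left fun x => by
    simp only [Function.comp_apply]; ring

lemma eventually_pos_of_isBigO_sub_pow {f : ℝ → ℝ} {c : ℝ} {m n : ℕ} (hc : 0 < c)
    (hmn : m < n) (h : (fun x => f x - c * x ^ m) =O[𝓝 0] fun x => x ^ n) :
    ∀ᶠ x in 𝓝[>] 0, 0 < f x := by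
  have hsmall := (h.trans_isLittleO (isLittleO_pow_pow hmn)).def (half_pos hc)
  filter_upwards [nhdsWithin_le_nhds hsmall, self_mem_nhdsWithin] with x hx (hx₀ : 0 < x)
  have hxm : 0 < x ^ m := pow_pos hx₀ m
  rw [Real.norm_eq_abs, Real.norm_of_nonneg hxm.le, abs_le] at hx
  nlinarith [hx.1]

section Expansion

variable {c₀ c₁ c₂ : ℝ} {q : ℝ → ℝ}

lemma isBigO_sub_quadratic
    (hq : (fun x => q x - (c₁ * x ^ 2 / 2 - c₂ * x ^ 4 / 24)) =O[𝓝 0] fun x => x ^ 6) :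
    (fun x => q x - c₁ / 2 * x ^ 2) =O[𝓝 0] fun x => x ^ 4 :=
  ((hq.trans (isBigO_pow_pow_of_le (by norm_num))).sub
    ((isBigO_refl _ _).const_mul_left (c₂ / 24))).congr_left fun x => by ring

lemma isBigO_inner_factor
    (hq : (fun x => q x - (c₁ * x ^ 2 / 2 - c₂ * x ^ 4 / 24)) =O[𝓝 0] fun x => x ^ 6) :
    (fun x => 4 * c₀ * q (x / 2) - 2 * q (x / 2) ^ 2 - c₀ * q x
      - (c₀ * c₂ - c₁ ^ 2) / 32 * x ^ 4) =O[𝓝 0] fun x => x ^ 6 := by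
  have hhalf := (isBigO_sub_quadratic hq).comp_half
  have hhalf' : (fun x => q (x / 2) + c₁ * (x / 2) ^ 2 / 2) =O[𝓝 0] fun x => x ^ 2 :=
    ((hhalf.trans (isBigO_pow_pow_of_le (by norm_num))).add
      ((isBigO_refl _ _).const_mul_left (c₁ / 4))).congr_left fun x => by ring
  refine (((hq.comp_half.const_mul_left (4 * c₀)).sub (hq.const_mul_left c₀)).sub
    (((hhalf.mul hhalf').congr_right fun x => by ring).const_mul_left 2)).congr_left
      fun x => by ring

lemma isBigO_factored_det_sub
    (hq : (fun x => q x - (c₁ * x ^ 2 / 2 - c₂ * x ^ 4 / 24)) =O[𝓝 0] fun x => x ^ 6) :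
    (fun x => q x * (4 * c₀ * q (x / 2) - 2 * q (x / 2) ^ 2 - c₀ * q x)
      - c₁ / 64 * (c₀ * c₂ - c₁ ^ 2) * x ^ 6) =O[𝓝 0] fun x => x ^ 8 := by
  have hinner := isBigO_inner_factor (c₀ := c₀) hq
  have hinner' : (fun x => 4 * c₀ * q (x / 2) - 2 * q (x / 2) ^ 2 - c₀ * q x)
      =O[𝓝 0] fun x => x ^ 4 :=
    ((hinner.trans (isBigO_pow_pow_of_le (by norm_num))).add
      ((isBigO_refl _ _).const_mul_left ((c₀ * c₂ - c₁ ^ 2) / 32))).congr_left fun x => by ring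
  have h₁ := ((isBigO_sub_quadratic hq).mul hinner').congr_right (g₂ := fun x => x ^ 8)
    fun x => by ring
  have h₂ := (((isBigO_refl (fun x : ℝ => x ^ 2) _).mul hinner).const_mul_left
    (c₁ / 2)).congr_right (g₂ := fun x => x ^ 8) fun x => by ring
  exact (h₁.add h₂).congr_left fun x => by ring

end Expansion

lemma det_centrosymm (a b c : ℝ) :
    !![a, b, c; b, a, b; c, b, a].det = (a - c) * (a * (a + c) - 2 * b ^ 2) := by
  rw [Matrix.det_fin_three]
  simp only [Fin.isValue, Matrix.of_apply, Matrix.cons_val', Matrix.cons_val_zero,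
    Matrix.cons_val_fin_one, Matrix.cons_val_one, Matrix.cons_val]
  ring

lemma posDef_centrosymm {a b c : ℝ} (ha : 0 < a) (hac : 0 < a - c)
    (hb : 0 < a * (a + c) - 2 * b ^ 2) : (!![a, b, c; b, a, b; c, b, a]).PosDef := by
  rw [Matrix.posDef_iff_dotProduct_mulVec]
  refine ⟨?_, fun x hx => ?_⟩
  · ext i j
    fin_cases i <;> fin_cases j <;> rfl
  have hquad : star x ⬝ᵥ (!![a, b, c; b, a, b; c, b, a].mulVec x)
      = a * (x 0 ^ 2 + x 1 ^ 2 + x 2 ^ 2) + 2 * b * x 1 * (x 0 + x 2) + 2 * c * x 0 * x 2 := by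
    simp only [dotProduct, Pi.star_apply, star_trivial, Matrix.mulVec, Matrix.of_apply,
      Matrix.cons_val', Matrix.cons_val_fin_one, Fin.sum_univ_three, Fin.isValue,
      Matrix.cons_val_zero, Matrix.cons_val_one, Matrix.cons_val]
    ring
  -- `(1, 0, -1)` spans an invariant line (eigenvalue `a - c`); the rest is a `2 × 2` block
  have hsos : a * (star x ⬝ᵥ (!![a, b, c; b, a, b; c, b, a].mulVec x))
      = a * (a - c) * (x 0 - x 2) ^ 2 / 2 + (a * x 1 + b * (x 0 + x 2)) ^ 2
        + (a * (a + c) - 2 * b ^ 2) * (x 0 + x 2) ^ 2 / 2 := by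
    rw [hquad]; ring
  refine pos_of_mul_pos_right (hsos ▸ ?_) ha.le
  by_cases hs : x 0 + x 2 = 0
  · by_cases hd : x 0 - x 2 = 0
    · have h₀ : x 0 = 0 := by linarith
      have h₂ : x 2 = 0 := by linarith
      have h₁ : x 1 ≠ 0 := fun h₁ => hx (by ext i; fin_cases i <;> assumption)
      rw [hs, hd]
      have : 0 < (a * x 1) ^ 2 := by positivity
      simpa using this
    · have : 0 < a * (a - c) * (x 0 - x 2) ^ 2 / 2 := by positivity
      positivity
  · have : 0 < (a * (a + c) - 2 * b ^ 2) * (x 0 + x 2) ^ 2 / 2 := by positivity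
    positivity

/-- For the covariance matrix `C(δ)` of `(u(x), u(x+δ/2), u(x+δ))` for a random
`L`-periodic function with covariance function `r`, one has
`det C(δ) = (R₁/64)(R₀R₂ − R₁²)δ⁶ + O(δ⁸)` as `δ → 0⁺`; in particular `C(δ)` is
positive definite for all sufficiently small `δ > 0`. -/
theorem covariance_det_asymptotics (L : ℝ) (hL : 0 < L) (a : ℕ → ℝ)
    (hsum : Summable fun k : ℕ => (k : ℝ) ^ 8 * a k ^ 2)
    (hnz : ∃ k₁ k₂ : ℕ, k₁ ≠ k₂ ∧ a k₁ ≠ 0 ∧ a k₂ ≠ 0)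
    (r : ℝ → ℝ) (hr : ∀ δ, r δ = ∑' k : ℕ, a k ^ 2 * Real.cos (2 * π * k * δ / L))
    (A : ℕ → ℝ) (hA : ∀ l, A l = ∑' k : ℕ, (k : ℝ) ^ (2 * l) * a k ^ 2)
    (R : ℕ → ℝ) (hR : ∀ l, R l = (2 * π / L) ^ (2 * l) * A l)
    (C : ℝ → Matrix (Fin 3) (Fin 3) ℝ)
    (hC : ∀ δ, C δ = !![r 0, r (δ / 2), r δ;
                       r (δ / 2), r 0, r (δ / 2);
                       r δ, r (δ / 2), r 0]) :
    (fun δ => (C δ).det - R 1 / 64 * (R 0 * R 2 - R 1 ^ 2) * δ ^ 6)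
        =O[𝓝[>] (0 : ℝ)] (fun δ => δ ^ 8) ∧
      ∀ᶠ δ in 𝓝[>] (0 : ℝ), (C δ).PosDef := by
  obtain ⟨k₁, k₂, hk, ha₁, ha₂⟩ := hnz
  have hw : ∀ k, 0 ≤ a k ^ 2 := fun k => sq_nonneg _
  have hmom : ∀ m ≤ 8, Summable fun k : ℕ => (k : ℝ) ^ m * a k ^ 2 :=
    fun m hm => summable_pow_mul_of_le hw hm hsum
  have hr₀ : r 0 = R 0 := by simp [hr, hR, hA]
  have hR₀ : 0 < R 0 := by
    simpa [hR, hA] using (hmom 0 (by norm_num)).tsum_pos (fun k => by positivity) k₁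
      (by positivity)
  have hR₁ : 0 < R 1 := by
    obtain ⟨i, hi, hai⟩ : ∃ i, i ≠ 0 ∧ a i ≠ 0 := by
      rcases eq_or_ne k₁ 0 with rfl | h
      exacts [⟨k₂, hk.symm, ha₂⟩, ⟨k₁, h, ha₁⟩]
    rw [hR, hA]
    exact mul_pos (by positivity) (tsum_pow_mul_pos hw (hmom 2 (by norm_num)) hi (by positivity))
  have hgap : 0 < R 0 * R 2 - R 1 ^ 2 := by
    have hCS := sq_tsum_sq_mul_lt hw (hmom 4 (by norm_num)) hk (by positivity) (by positivity)
    simp only [hR, hA, Nat.reduceMul, pow_zero, one_mul]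
    nlinarith [mul_pos (by positivity : (0 : ℝ) < (2 * π / L) ^ 4) (sub_pos.2 hCS)]
  have hq := isBigO_cos_series_sub_taylor hw (hmom 6 (by norm_num)) (ω := 2 * π / L) (ρ := r)
    fun δ => by rw [hr]; congr 1; ext k; congr 2; ring
  rw [← hA 1, ← hA 2, ← hR 1, ← hR 2] at hq
  have hdet : ∀ δ, (C δ).det = (r 0 - r δ) * (4 * R 0 * (r 0 - r (δ / 2))
      - 2 * (r 0 - r (δ / 2)) ^ 2 - R 0 * (r 0 - r δ)) := by
    intro δ; rw [hC, det_centrosymm, ← hr₀]; ring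
  refine ⟨?_, ?_⟩
  · exact ((isBigO_factored_det_sub (c₀ := R 0) hq).mono nhdsWithin_le_nhds).congr_left
      fun δ => by rw [hdet]
  · filter_upwards [eventually_pos_of_isBigO_sub_pow (half_pos hR₁) (by norm_num : 2 < 4)
        (isBigO_sub_quadratic hq), eventually_pos_of_isBigO_sub_pow
        (by positivity : 0 < (R 0 * R 2 - R 1 ^ 2) / 32) (by norm_num : 4 < 6)
        (isBigO_inner_factor (c₀ := R 0) hq)] with δ h₁ h₂
    rw [hC]
    exact posDef_centrosymm (hr₀ ▸ hR₀) h₁ (by rw [hr₀] at h₂ ⊢; linarith)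
end
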